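/- arXiv:2405.06321 — 2 statements merged into one kernel-verified Lean document; each statement's English description precedes it below -/
import Mathlib

section
/- Suppose two word sequences are generated by the same Markov process with transition matrix A but with different initial (next-word) distributions p_t and p_s. Let x_t and x_s be the induced distributions over length-n sequences, i.e., x_t(b_1,…,b_n) = p_t(b_1)·∏_{τ=2}^{n} A_{b_{τ−1}, b_τ} and similarly for x_s. Then d_FR(x_t, x_s) = d_FR(p_t, p_s); that is, the Fisher-Rao distance between the full sequence distributions equals that between the initial next-word distributions. -/
open Finset

/-- Probability of a length-`(n+1)` word sequence under a Markov process with
initial distribution `p` and transition matrix `A`. -/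
noncomputable def markovSeqProb {V : Type*} [Fintype V] (n : ℕ)
    (p : V → ℝ) (A : V → V → ℝ) (b : Fin (n + 1) → V) : ℝ :=
  p (b 0) * ∏ i : Fin n, A (b i.castSucc) (b i.succ)

lemma sum_markov_aux {V : Type*} [Fintype V] (A : V → V → ℝ)
    (hA1 : ∀ i, ∑ j, A i j = 1) :
    ∀ (n : ℕ) (f : V → ℝ),
      ∑ b : Fin (n + 1) → V, f (b 0) * ∏ i : Fin n, A (b i.castSucc) (b i.succ)
        = ∑ w, f w := by
  intro n
  induction n with
  | zero =>
      intro f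
      rw [Fintype.sum_equiv (Equiv.funUnique (Fin 1) V)
        (fun b => f (b 0) * ∏ i : Fin 0, A (b i.castSucc) (b i.succ)) f]
      intro b; simp
  | succ m ih =>
      intro f
      rw [← Fintype.sum_equiv (Fin.consEquiv (fun _ : Fin (m + 2) => V))
        (fun p : V × (Fin (m + 1) → V) =>
          f ((Fin.cons p.1 p.2 : Fin (m + 2) → V) 0) *
          ∏ i : Fin (m + 1), A ((Fin.cons p.1 p.2 : Fin (m + 2) → V) i.castSucc)
            ((Fin.cons p.1 p.2 : Fin (m + 2) → V) i.succ))
        (fun b => f (b 0) * ∏ i : Fin (m + 1), A (b i.castSucc) (b i.succ))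
        (fun p => by simp [Fin.consEquiv])]
      rw [Fintype.sum_prod_type]
      calc ∑ w : V, ∑ b : Fin (m + 1) → V,
            f ((Fin.cons w b : Fin (m + 2) → V) 0) *
              ∏ i : Fin (m + 1), A ((Fin.cons w b : Fin (m + 2) → V) i.castSucc)
                ((Fin.cons w b : Fin (m + 2) → V) i.succ)
          = ∑ w : V, ∑ b : Fin (m + 1) → V,
            f w * (A w (b 0) * ∏ i : Fin m, A (b i.castSucc) (b i.succ)) := by
            refine Finset.sum_congr rfl fun w _ => Finset.sum_congr rfl fun b _ => ?_
            rw [Fin.prod_univ_succ]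
            simp [Fin.cons_zero, Fin.cons_succ, ← Fin.succ_castSucc, mul_assoc]
        _ = ∑ w : V, f w * ∑ b : Fin (m + 1) → V,
              A w (b 0) * ∏ i : Fin m, A (b i.castSucc) (b i.succ) := by
            simp [Finset.mul_sum]
        _ = ∑ w : V, f w * 1 := by
            refine Finset.sum_congr rfl fun w _ => ?_
            rw [ih (fun v => A w v), hA1]
        _ = ∑ w, f w := by simp

theorem fisherRao_markov_same_transition {V : Type*} [Fintype V] (n : ℕ)
    (A : V → V → ℝ) (pt ps : V → ℝ)
    (hA0 : ∀ i j, 0 ≤ A i j) (hA1 : ∀ i, ∑ j, A i j = 1)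
    (hpt0 : ∀ w, 0 ≤ pt w) (hpt1 : ∑ w, pt w = 1)
    (hps0 : ∀ w, 0 ≤ ps w) (hps1 : ∑ w, ps w = 1) :
    2 * Real.arccos (∑ b : Fin (n + 1) → V,
        Real.sqrt (markovSeqProb n pt A b * markovSeqProb n ps A b))
      = 2 * Real.arccos (∑ w, Real.sqrt (pt w * ps w)) := by
  congr 1
  have key : ∀ b : Fin (n + 1) → V,
      Real.sqrt (markovSeqProb n pt A b * markovSeqProb n ps A b)
        = Real.sqrt (pt (b 0) * ps (b 0)) *
            ∏ i : Fin n, A (b i.castSucc) (b i.succ) := by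
    intro b
    have hP : (0:ℝ) ≤ ∏ i : Fin n, A (b i.castSucc) (b i.succ) :=
      Finset.prod_nonneg fun i _ => hA0 _ _
    have : markovSeqProb n pt A b * markovSeqProb n ps A b
        = (pt (b 0) * ps (b 0)) * (∏ i : Fin n, A (b i.castSucc) (b i.succ))^2 := by
      unfold markovSeqProb; ring
    rw [this, Real.sqrt_mul (mul_nonneg (hpt0 _) (hps0 _)), Real.sqrt_sq hP]
  rw [Finset.sum_congr rfl fun b _ => key b,
    sum_markov_aux A hA1 n (fun w => Real.sqrt (pt w * ps w))]
end

section
/- For two i.i.d. word-generation processes over a vocabulary V whose single-step distributions u and v both assign probability u_1 = v_1 = ρ ∈ (0,1) to the end token END, the distance distortion rate r(x_t,x_s) = d_FR(x_t,x_s)/d_FR(u,v) between the induced distributions over closed texts satisfies limsup_{d_FR(u,v)→0} r(x_t,x_s) ≤ ρ^{−1/2}. -/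
open Finset

/-- Probability of a closed text (words `l` followed by `END` = `none`) under an
i.i.d. process with single-step distribution `u` on `Option W`. -/
noncomputable def iidClosedTextProb {W : Type*} (u : Option W → ℝ)
    (l : List W) : ℝ :=
  (l.map (fun w => u (some w))).prod * u none

/-- Fisher-Rao distance between distributions on the finite vocabulary. -/
noncomputable def dFRfin {W : Type*} [Fintype W] (u v : Option W → ℝ) : ℝ :=
  2 * Real.arccos (∑ a, Real.sqrt (u a * v a))

lemma iid_aux_fin_sum {W : Type*} [Fintype W] (g : W → ℝ) (n : ℕ) :
    ∑ p : Fin n → W, ∏ i, g (p i) = (∑ w, g w) ^ n := by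
  classical
  have h := Finset.sum_prod_piFinset (univ : Finset W) (fun (_ : Fin n) w => g w)
  rw [Fintype.piFinset_univ] at h
  rw [h, Finset.prod_const, Finset.card_univ, Fintype.card_fin]

lemma iid_aux_tsum {W : Type*} [Fintype W] (g : W → ℝ) (hg : ∀ w, 0 ≤ g w)
    (hT : ∑ w, g w < 1) :
    Summable (fun l : List W => (l.map g).prod) ∧
      ∑' l : List W, (l.map g).prod = (1 - ∑ w, g w)⁻¹ := by
  classical
  set T := ∑ w, g w with hTdef
  have hT0 : 0 ≤ T := Finset.sum_nonneg fun w _ => hg w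
  set F : List W → ℝ := fun l => (l.map g).prod with hF
  have hcomp : ∀ σ : Σ n, Fin n → W, F ((List.equivSigmaTuple (α := W)).symm σ)
      = ∏ i, g (σ.2 i) := by
    rintro ⟨n, p⟩
    simp only [F, List.equivSigmaTuple, Equiv.coe_fn_symm_mk, List.map_ofFn]
    rw [List.prod_ofFn]
    rfl
  have hnn : ∀ σ : Σ n, Fin n → W, 0 ≤ ∏ i, g (σ.2 i) :=
    fun σ => Finset.prod_nonneg fun i _ => hg _
  have hfib : ∀ n : ℕ, Summable (fun p : Fin n → W => ∏ i, g (p i)) :=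
    fun n => (hasSum_fintype _).summable
  have htsumfib : ∀ n : ℕ, ∑' p : Fin n → W, ∏ i, g (p i) = T ^ n := by
    intro n; rw [tsum_fintype, iid_aux_fin_sum]
  have hsum2 : Summable (fun n : ℕ => ∑' p : Fin n → W, ∏ i, g (p i)) := by
    simp_rw [htsumfib]
    exact summable_geometric_of_lt_one hT0 hT
  have hS : Summable (fun σ : Σ n, Fin n → W => ∏ i, g (σ.2 i)) :=
    (summable_sigma_of_nonneg hnn).2 ⟨hfib, hsum2⟩
  have hS' : Summable (F ∘ (List.equivSigmaTuple (α := W)).symm) :=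
    hS.congr fun σ => (hcomp σ).symm
  have hFsummable : Summable F := (Equiv.summable_iff _).mp hS'
  refine ⟨hFsummable, ?_⟩
  have h1 : ∑' l : List W, F l = ∑' σ : Σ n, Fin n → W,
      F ((List.equivSigmaTuple (α := W)).symm σ) :=
    ((List.equivSigmaTuple (α := W)).symm.tsum_eq F).symm
  rw [h1, tsum_congr hcomp, Summable.tsum_sigma hS]
  calc ∑' n : ℕ, ∑' p : Fin n → W, ∏ i, g (p i) = ∑' n : ℕ, T ^ n :=
        tsum_congr htsumfib
    _ = (1 - T)⁻¹ := tsum_geometric_of_lt_one hT0 hT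

lemma iid_aux_sqrt_prod {W : Type*} (u v : W → ℝ) (hu : ∀ w, 0 ≤ u w) (hv : ∀ w, 0 ≤ v w)
    (l : List W) :
    Real.sqrt ((l.map u).prod * (l.map v).prod)
      = (l.map fun w => Real.sqrt (u w * v w)).prod := by
  induction l with
  | nil => simp
  | cons a l ih =>
    simp only [List.map_cons, List.prod_cons]
    rw [show u a * (l.map u).prod * (v a * (l.map v).prod)
        = (u a * v a) * ((l.map u).prod * (l.map v).prod) by ring,
      Real.sqrt_mul (mul_nonneg (hu a) (hv a)), ih]


set_option maxHeartbeats 1000000 in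
theorem iid_distortion_limsup {W : Type*} [Fintype W]
    (ρ : ℝ) (hρ0 : 0 < ρ) (hρ1 : ρ < 1) :
    ∀ ε > 0, ∃ δ > 0, ∀ u v : Option W → ℝ,
      (∀ a, 0 ≤ u a) → (∑ a, u a = 1) →
      (∀ a, 0 ≤ v a) → (∑ a, v a = 1) →
      u none = ρ → v none = ρ →
      0 < dFRfin u v → dFRfin u v < δ →
      (2 * Real.arccos (∑' l : List W,
          Real.sqrt (iidClosedTextProb u l * iidClosedTextProb v l)))
        / dFRfin u v ≤ 1 / Real.sqrt ρ + ε := by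
  classical
  intro ε hε
  set r := Real.sqrt ρ with hr_def
  have hr : 0 < r := Real.sqrt_pos.2 hρ0
  set m : ℝ := min (1/2) (r * ε) with hm_def
  have hm0 : 0 < m := lt_min (by norm_num) (mul_pos hr hε)
  have hm1 : m ≤ 1/2 := min_le_left _ _
  have hm2 : m ≤ r * ε := min_le_right _ _
  set η : ℝ := Real.sqrt (8 * m) with hη_def
  have hη0 : 0 < η := Real.sqrt_pos.2 (by linarith)
  have hηsq : η ^ 2 = 8 * m := Real.sq_sqrt (by linarith)
  obtain ⟨y₀, hy₀, hycont⟩ :=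
    Metric.continuousAt_iff.mp (Real.continuous_arccos.continuousAt (x := 1)) η hη0
  refine ⟨Real.sqrt (8 * ρ * y₀), Real.sqrt_pos.2 (by positivity), ?_⟩
  intro u v hu hu1 hv hv1 hun hvn hd0 hdδ
  set δ := Real.sqrt (8 * ρ * y₀) with hδ_def
  have hδsq : δ ^ 2 = 8 * ρ * y₀ := Real.sq_sqrt (by positivity)
  set g : W → ℝ := fun w => Real.sqrt (u (some w) * v (some w)) with hg_def
  have hg0 : ∀ w, 0 ≤ g w := fun w => Real.sqrt_nonneg _
  set T := ∑ w, g w with hT_def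
  have hT0 : 0 ≤ T := Finset.sum_nonneg fun w _ => hg0 w
  -- split sums over Option
  have husum : ∑ w, u (some w) = 1 - ρ := by
    have := hu1
    rw [univ_option, Finset.sum_insertNone] at this
    rw [hun] at this; linarith
  have hvsum : ∑ w, v (some w) = 1 - ρ := by
    have := hv1
    rw [univ_option, Finset.sum_insertNone] at this
    rw [hvn] at this; linarith
  have hS_eq : ∑ a, Real.sqrt (u a * v a) = ρ + T := by
    rw [univ_option, Finset.sum_insertNone]
    rw [hun, hvn, Real.sqrt_mul_self hρ0.le]
  -- Cauchy–Schwarz: T ≤ 1 - ρ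
  have hT_le : T ≤ 1 - ρ := by
    have hcs := Finset.sum_mul_sq_le_sq_mul_sq univ
      (fun w => Real.sqrt (u (some w))) (fun w => Real.sqrt (v (some w)))
    have e1 : ∀ w : W, Real.sqrt (u (some w)) * Real.sqrt (v (some w)) = g w :=
      fun w => (Real.sqrt_mul (hu _) _).symm
    have e2 : ∀ w : W, Real.sqrt (u (some w)) ^ 2 = u (some w) :=
      fun w => Real.sq_sqrt (hu _)
    have e3 : ∀ w : W, Real.sqrt (v (some w)) ^ 2 = v (some w) :=
      fun w => Real.sq_sqrt (hv _)
    simp_rw [e1, e2, e3] at hcs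
    rw [husum, hvsum] at hcs
    have h1ρ : (0:ℝ) ≤ 1 - ρ := by linarith
    calc T = Real.sqrt (T ^ 2) := (Real.sqrt_sq hT0).symm
      _ ≤ Real.sqrt ((1 - ρ) * (1 - ρ)) := Real.sqrt_le_sqrt hcs
      _ = 1 - ρ := Real.sqrt_mul_self h1ρ
  have hT1 : T < 1 := by linarith
  -- dFR and basic quantities
  have hdfr : dFRfin u v = 2 * Real.arccos (ρ + T) := by
    rw [dFRfin, hS_eq]
  set φ := Real.arccos (ρ + T) with hφ_def
  have hφ0 : 0 < φ := by rw [hdfr] at hd0; linarith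
  have hS_lt1 : ρ + T < 1 := Real.arccos_pos.mp hφ0
  set s := 1 - (ρ + T) with hs_def
  have hs0 : 0 < s := by linarith
  have hcosφ : Real.cos φ = ρ + T :=
    Real.cos_arccos (by linarith) (by linarith)
  have hs_le : s ≤ φ ^ 2 / 2 := by
    have := Real.one_sub_sq_div_two_le_cos (x := φ)
    rw [hcosφ] at this; linarith
  have hφδ : 2 * φ < δ := by rw [hdfr] at hdδ; linarith
  have hs_lt : s < ρ * y₀ := by
    have h2 : φ * φ < (δ / 2) * (δ / 2) :=
      mul_self_lt_mul_self hφ0.le (by linarith)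
    have h3 : φ ^ 2 < δ ^ 2 / 4 := by rw [sq, sq]; linarith
    rw [hδsq] at h3
    linarith
  -- compute the tsum
  obtain ⟨hsummable, htsum⟩ := iid_aux_tsum g hg0 hT1
  have hterm : ∀ l : List W,
      Real.sqrt (iidClosedTextProb u l * iidClosedTextProb v l)
        = ρ * (l.map g).prod := by
    intro l
    have hpu : 0 ≤ (l.map fun w => u (some w)).prod :=
      List.prod_nonneg (by
        intro a ha; rcases List.mem_map.mp ha with ⟨w, _, rfl⟩; exact hu _)
    have hpv : 0 ≤ (l.map fun w => v (some w)).prod :=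
      List.prod_nonneg (by
        intro a ha; rcases List.mem_map.mp ha with ⟨w, _, rfl⟩; exact hv _)
    rw [iidClosedTextProb, iidClosedTextProb,
      show (l.map fun w => u (some w)).prod * u none
          * ((l.map fun w => v (some w)).prod * v none)
        = ((l.map fun w => u (some w)).prod * (l.map fun w => v (some w)).prod)
          * (u none * v none) by ring,
      Real.sqrt_mul (mul_nonneg hpu hpv),
      iid_aux_sqrt_prod (fun w => u (some w)) (fun w => v (some w)) (fun w => hu _) (fun w => hv _) l, hun, hvn, Real.sqrt_mul_self hρ0.le]
    exact mul_comm _ _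
  have hρs : 0 < ρ + s := by linarith
  have hB : (∑' l : List W,
      Real.sqrt (iidClosedTextProb u l * iidClosedTextProb v l)) = 1 - s / (ρ + s) := by
    calc (∑' l : List W, Real.sqrt (iidClosedTextProb u l * iidClosedTextProb v l))
        = ∑' l : List W, ρ * (l.map g).prod := tsum_congr hterm
      _ = ρ * ∑' l : List W, (l.map g).prod := tsum_mul_left
      _ = ρ * (1 - T)⁻¹ := by rw [htsum]
      _ = 1 - s / (ρ + s) := by
          rw [show 1 - T = ρ + s by rw [hs_def]; ring]
          field_simp
          ring
  set y := s / (ρ + s) with hy_def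
  have hy0 : 0 < y := div_pos hs0 hρs
  have hy1 : y < 1 := (div_lt_one hρs).2 (by linarith)
  have hy_le : y ≤ s / ρ := by
    apply div_le_div_of_nonneg_left hs0.le hρ0
    linarith
  have hy_lt : y < y₀ := lt_of_le_of_lt hy_le ((div_lt_iff₀ hρ0).2 (by linarith))
  rw [hB, hdfr]
  set ψ := Real.arccos (1 - y) with hψ_def
  have hψ0 : 0 < ψ := Real.arccos_pos.2 (by linarith)
  have hψπ : ψ ≤ Real.pi := Real.arccos_le_pi _
  have hcosψ : Real.cos ψ = 1 - y :=
    Real.cos_arccos (by linarith) (by linarith)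
  -- ψ < η via continuity
  have hψη : ψ < η := by
    have h := hycont (x := 1 - y) (by
      rw [Real.dist_eq]
      rw [show (1 - y) - 1 = -y by ring, abs_neg, abs_of_pos hy0]
      exact hy_lt)
    rw [Real.dist_eq, Real.arccos_one, sub_zero] at h
    calc ψ ≤ |ψ| := le_abs_self _
      _ < η := h
  have hψsq : ψ ^ 2 < 8 * m := by
    have h := mul_self_lt_mul_self hψ0.le hψη
    calc ψ ^ 2 = ψ * ψ := sq ψ
      _ < η * η := h
      _ = 8 * m := by rw [← sq]; exact hηsq
  have hψ2 : ψ / 2 ≤ 1 := by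
    have hη2 : η ≤ 2 := by
      rw [hη_def]
      calc Real.sqrt (8 * m) ≤ Real.sqrt 4 := Real.sqrt_le_sqrt (by linarith)
        _ = 2 := by
            rw [show (4:ℝ) = 2 ^ 2 by norm_num, Real.sqrt_sq (by norm_num)]
    linarith
  -- sin bound
  have hsin_sq : Real.sin (ψ / 2) ^ 2 = y / 2 := by
    have h := Real.sin_sq_eq_half_sub (ψ / 2)
    rw [show 2 * (ψ / 2) = ψ by ring] at h
    rw [h, hcosψ]; ring
  have hsin_nonneg : 0 ≤ Real.sin (ψ / 2) :=
    Real.sin_nonneg_of_nonneg_of_le_pi (by linarith) (by linarith [Real.pi_gt_three])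
  have hsin_eq : Real.sin (ψ / 2) = Real.sqrt (y / 2) := by
    rw [← hsin_sq, Real.sqrt_sq hsin_nonneg]
  have hsin_gt := Real.sin_gt_sub_cube (by linarith : 0 < ψ / 2)
  rw [hsin_eq] at hsin_gt
  have hkey0 : ψ * (1 - ψ ^ 2 / 16) ≤ 2 * Real.sqrt (y / 2) := by
    have he : ψ * (1 - ψ ^ 2 / 16) = 2 * (ψ / 2 - (ψ / 2) ^ 3 / 4) := by ring
    linarith [hsin_gt, pow_pos (by linarith : (0:ℝ) < ψ / 2) 3]
  have h2y : 2 * Real.sqrt (y / 2) = Real.sqrt (2 * y) := by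
    rw [show 2 * y = 4 * (y / 2) by ring, Real.sqrt_mul (by norm_num : (0:ℝ) ≤ 4),
      show Real.sqrt 4 = 2 by
        rw [show (4:ℝ) = 2 ^ 2 by norm_num, Real.sqrt_sq (by norm_num)]]
  have h3 : Real.sqrt (2 * y) ≤ Real.sqrt (2 * s) / r := by
    rw [hr_def, ← Real.sqrt_div (by linarith : (0:ℝ) ≤ 2 * s)]
    apply Real.sqrt_le_sqrt
    rw [le_div_iff₀ hρ0]
    have hyρ : y * ρ ≤ s := by
      have h := mul_le_mul_of_nonneg_right hy_le hρ0.le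
      rwa [div_mul_cancel₀ _ hρ0.ne'] at h
    linarith
  have h1 : Real.sqrt (2 * s) ≤ φ := by
    have : 2 * s ≤ φ ^ 2 := by linarith
    calc Real.sqrt (2 * s) ≤ Real.sqrt (φ ^ 2) := Real.sqrt_le_sqrt this
      _ = φ := Real.sqrt_sq hφ0.le
  have hkey : ψ * (1 - ψ ^ 2 / 16) ≤ φ / r := by
    calc ψ * (1 - ψ ^ 2 / 16) ≤ 2 * Real.sqrt (y / 2) := hkey0
      _ = Real.sqrt (2 * y) := h2y
      _ ≤ Real.sqrt (2 * s) / r := h3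
      _ ≤ φ / r := by apply div_le_div_of_nonneg_right h1 hr.le
  have hkey' : r * (ψ * (1 - ψ ^ 2 / 16)) ≤ φ := by
    rw [← le_div_iff₀' hr]; exact hkey
  have hgoal' : r * ψ ≤ (1 + r * ε) * φ := by
    have hrε : 0 < r * ε := mul_pos hr hε
    have hc2 : ψ ^ 2 / 16 ≤ (r * ε) / 2 := by linarith
    have hc4 : ψ ^ 2 / 16 ≤ 1 / 4 := by linarith
    have hcrε : (ψ ^ 2 / 16) * (r * ε) ≤ (1 / 4) * (r * ε) :=
      mul_le_mul_of_nonneg_right hc4 hrε.le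
    have hprod : 1 ≤ (1 + r * ε) * (1 - ψ ^ 2 / 16) := by
      have he : (1 + r * ε) * (1 - ψ ^ 2 / 16)
          = 1 + r * ε - ψ ^ 2 / 16 - (ψ ^ 2 / 16) * (r * ε) := by ring
      linarith
    have h1 : (1 + r * ε) * (r * (ψ * (1 - ψ ^ 2 / 16))) ≤ (1 + r * ε) * φ :=
      mul_le_mul_of_nonneg_left hkey' (by positivity)
    have h2 : r * ψ ≤ (1 + r * ε) * (r * (ψ * (1 - ψ ^ 2 / 16))) := by
      have h3 : r * ψ * 1 ≤ r * ψ * ((1 + r * ε) * (1 - ψ ^ 2 / 16)) :=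
        mul_le_mul_of_nonneg_left hprod (mul_nonneg hr.le hψ0.le)
      calc r * ψ = r * ψ * 1 := (mul_one _).symm
        _ ≤ r * ψ * ((1 + r * ε) * (1 - ψ ^ 2 / 16)) := h3
        _ = (1 + r * ε) * (r * (ψ * (1 - ψ ^ 2 / 16))) := by ring
    linarith
  rw [mul_div_mul_left _ _ (two_ne_zero)]
  rw [div_le_iff₀ hφ0]
  have : ψ = r * ψ / r := by field_simp
  rw [this]
  calc r * ψ / r ≤ (1 + r * ε) * φ / r := by
        apply div_le_div_of_nonneg_right hgoal' hr.le
    _ = (1 / r + ε) * φ := by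
        field_simp
end
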